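/- arXiv:1007.4952 — 3 statements merged into one kernel-verified Lean document; each statement's English description precedes it below -/
import Mathlib

section
/- Let $V_0$ be a $5$-dimensional complex vector space, $U \subset V_0$ a codimension-$1$ subspace, and $\alpha \in \bigwedge^2 V_0$. Then $\alpha \wedge \omega = 0$ for every $\omega \in \bigwedge^3 U$ if and only if the support of $\alpha$ (the smallest subspace $W$ with $\alpha \in \bigwedge^2 W$) is contained in $U$. -/
/-!
Choose `v ∉ U`; then `V₀ = U ⊕ ℂ v`, so every `α ∈ ⋀²V₀` is `a + v ∧ u` with `a ∈ ⋀²U` and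
`u ∈ U`. As `⋀⁵U = 0`, we get `α ∧ ω = v ∧ u ∧ ω` for `ω ∈ ⋀³U`. If `u ≠ 0`, complete it to a
basis `u, w₁, w₂, w₃` of `U`: then `v, u, w₁, w₂, w₃` is linearly independent, so
`ω = w₁ ∧ w₂ ∧ w₃` gives `v ∧ u ∧ ω ≠ 0`.
-/

open ExteriorAlgebra

/-- The image of `⋀^n U` in the exterior algebra of the ambient space, for a subspace `U`. -/
noncomputable def wedgePow {V : Type*} [AddCommGroup V] [Module ℂ V]
    (U : Submodule ℂ V) (n : ℕ) : Submodule ℂ (ExteriorAlgebra ℂ V) :=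
  (U.map (ι ℂ)) ^ n

open Module Submodule

section LinearIndependent

variable {K M : Type*} [Field K] [AddCommGroup M] [Module K M]

theorem exists_linearIndependent_finCons_of_ne_zero {x : M} (hx : x ≠ 0) :
    ∀ {n : ℕ}, n < finrank K M →
      ∃ w : Fin n → M, LinearIndependent K (Fin.cons x w : Fin (n + 1) → M)
  | 0, _ => ⟨Fin.elim0, linearIndependent_finCons.2
      ⟨linearIndependent_empty_type, by simpa [Set.range_eq_empty] using hx⟩⟩
  | n + 1, hn => by
    obtain ⟨w, hw⟩ := exists_linearIndependent_finCons_of_ne_zero hx (n := n) (by omega)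
    obtain ⟨y, hy⟩ := exists_linearIndependent_snoc_of_lt_finrank hw hn
    exact ⟨Fin.snoc w y, by rwa [Fin.cons_snoc_eq_snoc_cons]⟩

theorem exists_notMem_sup_span_singleton_eq_top [FiniteDimensional K M] {U : Submodule K M}
    (hU : finrank K U + 1 = finrank K M) : ∃ v ∉ U, U ⊔ K ∙ v = ⊤ := by
  obtain ⟨v, -, hv⟩ := SetLike.exists_of_lt (lt_top_iff_ne_top.2 fun h : U = ⊤ => by
    rw [h, finrank_top] at hU; omega)
  refine ⟨v, hv, eq_top_of_finrank_eq (le_antisymm (finrank_le _) ?_)⟩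
  have := finrank_lt_finrank_of_lt
    (left_lt_sup.2 fun h => hv ((span_singleton_le_iff_mem v U).1 h))
  omega

end LinearIndependent

namespace ExteriorAlgebra

variable {K V : Type*} [Field K] [AddCommGroup V] [Module K V]

theorem ιMulti_ne_zero_of_linearIndependent {n : ℕ} {v : Fin n → V}
    (hv : LinearIndependent K v) : ιMulti K n v ≠ 0 := by
  -- `ιMulti K n v` is the member of `ιMulti_family K n v` at the unique `n`-subset of `Fin n`.
  have := (exteriorPower.ιMulti_family_linearIndependent_field (n := n) hv).ne_zero
    (Set.powersetCard.ofFinEmbEquiv (OrderIso.refl (Fin n)).toOrderEmbedding)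
  rw [← exteriorPower.ιMulti_apply_coe, ne_eq, ZeroMemClass.coe_eq_zero]
  simpa [exteriorPower.ιMulti_family] using this

theorem ιMulti_mem_map_ι_pow (U : Submodule K V) {n : ℕ} {v : Fin n → V}
    (hv : ∀ i, v i ∈ U) : ιMulti K n v ∈ U.map (ι K) ^ n := by
  rw [ιMulti_apply]
  exact pow_subset_pow _ (Set.mem_pow.2 ⟨fun i => ⟨ι K (v i), mem_map_of_mem (hv i)⟩, rfl⟩)

theorem map_ι_pow_eq_bot_of_finrank_lt (U : Submodule K V) [FiniteDimensional K U] {n : ℕ}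
    (hn : finrank K U < n) : U.map (ι K) ^ n = ⊥ := by
  rw [pow_eq_span_pow_set, ← le_bot_iff, span_le]
  intro t ht
  obtain ⟨f, rfl⟩ := Set.mem_pow.1 ht
  choose u hu hfu using fun i => (f i).2
  have hdep : ¬ LinearIndependent K u := fun hli => by
    have := (LinearIndependent.of_comp U.subtype
      (v := fun i => (⟨u i, hu i⟩ : U)) hli).fintype_card_le_finrank
    simp only [Fintype.card_fin] at this
    omega
  simp [← hfu, ← ιMulti_apply, (ιMulti K n).map_linearDependent u hdep]

theorem map_ι_mul_map_ι_le (M N : Submodule K V) :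
    M.map (ι K) * N.map (ι K) ≤ N.map (ι K) * M.map (ι K) := by
  refine mul_le.2 ?_
  rintro _ ⟨x, hx, rfl⟩ _ ⟨y, hy, rfl⟩
  rw [eq_neg_of_add_eq_zero_left (ι_add_mul_swap x y)]
  exact neg_mem (mul_mem_mul (mem_map_of_mem hy) (mem_map_of_mem hx))

theorem map_ι_span_singleton_mul_self (v : V) :
    (K ∙ v).map (ι K) * (K ∙ v).map (ι K) = ⊥ := by
  rw [map_span, Set.image_singleton, span_mul_span, Set.singleton_mul_singleton, ι_sq_zero,
    span_zero_singleton]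

theorem exists_eq_add_ι_mul_ι {U : Submodule K V} {v : V} (hUv : U ⊔ K ∙ v = ⊤)
    {α : ExteriorAlgebra K V} (hα : α ∈ ⋀[K]^2 V) :
    ∃ a ∈ U.map (ι K) ^ 2, ∃ u ∈ U, α = a + ι K v * ι K u := by
  set A := U.map (ι K)
  set B := (K ∙ v).map (ι K)
  have hsplit : ⋀[K]^2 V ≤ A ^ 2 ⊔ B * A := calc
    ⋀[K]^2 V = (A ⊔ B) * (A ⊔ B) := by
      rw [exteriorPower, sq, LinearMap.range_eq_map, ← hUv, Submodule.map_sup]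
    _ = A * A ⊔ B * A ⊔ (A * B ⊔ B * B) := by
      rw [Submodule.mul_sup, Submodule.sup_mul, Submodule.sup_mul]
    _ ≤ A ^ 2 ⊔ B * A := by
      rw [map_ι_span_singleton_mul_self, sup_bot_eq, sq]
      exact sup_le le_rfl (le_sup_of_le_right (map_ι_mul_map_ι_le _ _))
  obtain ⟨a, ha, m, hm, rfl⟩ := mem_sup.1 (hsplit hα)
  rw [show B = K ∙ ι K v by simp only [B, map_span, Set.image_singleton],
    mem_span_singleton_mul] at hm
  obtain ⟨_, ⟨u, hu, rfl⟩, rfl⟩ := hm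
  exact ⟨a, ha, u, hu, rfl⟩

theorem exists_ι_mul_ι_mul_ne_zero (U : Submodule K V) [FiniteDimensional K U] {n : ℕ}
    (hU : finrank K U = n + 1) {u v : V} (hu : u ∈ U) (hu0 : u ≠ 0) (hv : v ∉ U) :
    ∃ ω ∈ U.map (ι K) ^ n, ι K v * ι K u * ω ≠ 0 := by
  obtain ⟨w, hw⟩ := exists_linearIndependent_finCons_of_ne_zero
    (x := (⟨u, hu⟩ : U)) (by simpa using hu0) (n := n) (by rw [hU]; omega)
  have hli : LinearIndependent K (Fin.cons u (U.subtype ∘ w) : Fin (n + 1) → V) := by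
    simpa [Fin.comp_cons] using hw.map' U.subtype U.ker_subtype
  have hspan : span K (Set.range (Fin.cons u (U.subtype ∘ w) : Fin (n + 1) → V)) ≤ U := by
    rw [span_le, Set.range_subset_iff]
    intro i; cases i using Fin.cases <;> simp [hu]
  refine ⟨ιMulti K n (U.subtype ∘ w), ιMulti_mem_map_ι_pow U fun i => (w i).2, ?_⟩
  have := ιMulti_ne_zero_of_linearIndependent
    (linearIndependent_finCons.2 ⟨hli, fun h => hv (hspan h)⟩)
  simpa [ιMulti_succ_apply, Matrix.vecTail, Function.comp_def, mul_assoc] using this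

end ExteriorAlgebra

/-- for a hyperplane `U` in a `5`-dimensional space `V₀` and `α ∈ ⋀²V₀`,
`α ∧ ω = 0` for all `ω ∈ ⋀³U` iff the support of `α` is contained in `U`, i.e. iff
`α` lies in the image of `⋀²U`. -/
theorem wedge_vanish_iff_support_le {V₀ : Type*} [AddCommGroup V₀] [Module ℂ V₀]
    [FiniteDimensional ℂ V₀] (h5 : Module.finrank ℂ V₀ = 5)
    (U : Submodule ℂ V₀) (hU : Module.finrank ℂ U = 4)
    (α : ExteriorAlgebra ℂ V₀) (hα : α ∈ ⋀[ℂ]^2 V₀) :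
    (∀ ω ∈ wedgePow U 3, α * ω = 0) ↔ α ∈ wedgePow U 2 := by
  unfold wedgePow
  have hmul : ∀ β ∈ U.map (ι ℂ) ^ 2, ∀ ω ∈ U.map (ι ℂ) ^ 3, β * ω = 0 := fun β hβ ω hω => by
    have := mul_mem_mul hβ hω
    rwa [← pow_add, map_ι_pow_eq_bot_of_finrank_lt U (by omega), mem_bot] at this
  refine ⟨fun h => ?_, fun h ω hω => hmul α h ω hω⟩
  obtain ⟨v, hvU, hUv⟩ := exists_notMem_sup_span_singleton_eq_top (by omega : finrank ℂ U + 1 = _)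
  obtain ⟨a, ha, u, hu, rfl⟩ := exists_eq_add_ι_mul_ι hUv hα
  obtain rfl : u = 0 := by
    by_contra hu0
    obtain ⟨ω, hω, hne⟩ := exists_ι_mul_ι_mul_ne_zero U hU hu hu0 hvU
    exact hne (by simpa [add_mul, hmul a ha ω hω] using h ω hω)
  simpa using ha
end

section
/- Let $V_0$ be a $5$-dimensional complex vector space. If $\omega \in \bigwedge^3 V_0$ is not decomposable, then there exists a unique line $[v] \in \mathbb{P}(V_0)$ such that $v \wedge \omega = 0$. -/
/-!
Contraction `d⌋·` with a linear form is an antiderivation, so `ι m * x = 0` and `d m = 1` give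
`x = ι m * (d⌋x)`, where `d⌋x` has one degree less than `x`. Iterating, an element of `⋀ⁿV`
annihilated by more than `n` basis vectors is zero.

Existence: `(v, w) ↦ vol (w ∧ v ∧ ω)` is an alternating form on a space of odd dimension, hence
degenerate. A vector `v` in its kernel has `w ∧ (v ∧ ω) = 0` for every `w`, and since `v ∧ ω` has
degree `4 < 5`, this forces `v ∧ ω = 0`.

Uniqueness: two independent vectors annihilating `ω` split off from `ω` one after the other,
leaving a factor of degree one, so `ω` would be decomposable.
-/

open ExteriorAlgebra Module

local infixl:70 "⌋" => CliffordAlgebra.contractLeft (Q := 0)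

theorem LinearMap.BilinForm.IsAlt.not_separatingLeft {K V : Type*} [Field K] [NeZero (2 : K)]
    [AddCommGroup V] [Module K V] [FiniteDimensional K V] {B : LinearMap.BilinForm K V}
    (hB : B.IsAlt) (hodd : Odd (finrank K V)) : ¬ B.SeparatingLeft := by
  let b := finBasis K V
  rw [← hB.isRefl.nondegenerate_iff_separatingLeft]
  show ¬ LinearMap.BilinForm.Nondegenerate B
  rw [nondegenerate_iff_det_ne_zero b, not_not]
  set A := BilinForm.toMatrix b B
  have hA : A.transpose = -A := by
    ext i j
    simpa [A, BilinForm.toMatrix_apply] using (hB.neg_eq (b i) (b j)).symm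
  have hdet : A.det = -A.det := by
    conv_lhs => rw [← Matrix.det_transpose, hA]
    rw [Matrix.det_neg, Fintype.card_fin, hodd.neg_one_pow, neg_one_mul]
  rw [eq_neg_iff_add_eq_zero, ← two_mul] at hdet
  exact (mul_eq_zero.1 hdet).resolve_left two_ne_zero

theorem AlternatingMap.eq_basis_det_smulRight {R M N ι : Type*} [CommRing R] [AddCommGroup M]
    [Module R M] [AddCommGroup N] [Module R N] [Fintype ι] [DecidableEq ι] (e : Basis ι R M)
    (f : M [⋀^ι]→ₗ[R] N) : f = e.det.smulRight (f e) := by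
  refine Basis.ext_alternating e fun i h => ?_
  let σ : Equiv.Perm ι := Equiv.ofBijective i (Finite.injective_iff_bijective.1 h)
  change f (e ∘ σ) = e.det.smulRight (f e) (e ∘ σ)
  simp [AlternatingMap.map_perm, Basis.det_self]

theorem Module.exists_dual_apply_eq_one_and_apply_eq_zero {K V : Type*} [Field K]
    [AddCommGroup V] [Module K V] {x y : V} (h : x ∉ K ∙ y) :
    ∃ d : Dual K V, d x = 1 ∧ d y = 0 := by
  obtain ⟨f, hfx, hfy⟩ := Submodule.exists_dual_map_eq_bot_of_notMem h inferInstance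
  refine ⟨(f x)⁻¹ • f, inv_mul_cancel₀ hfx, ?_⟩
  have hy : f y ∈ (K ∙ y).map f := Submodule.mem_map_of_mem (Submodule.mem_span_singleton_self y)
  rw [hfy, Submodule.mem_bot] at hy
  simp [hy]

namespace ExteriorAlgebra

section CommRing

variable {R M : Type*} [CommRing R] [AddCommGroup M] [Module R M]

theorem contractLeft_ι_mul (d : Dual R M) (m : M) (x : ExteriorAlgebra R M) :
    d⌋(ι R m * x) = d m • x - ι R m * (d⌋x) :=
  CliffordAlgebra.contractLeft_ι_mul d m x

theorem ι_mul_mem_exteriorPower (m : M) {n : ℕ} {x : ExteriorAlgebra R M} (hx : x ∈ ⋀[R]^n M) :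
    ι R m * x ∈ ⋀[R]^(n + 1) M := by
  rw [add_comm]
  exact SetLike.mul_mem_graded (by simp) hx

theorem contractLeft_eq_zero_of_mem_exteriorPower_zero (d : Dual R M)
    {x : ExteriorAlgebra R M} (hx : x ∈ ⋀[R]^0 M) : d⌋x = 0 := by
  obtain ⟨r, rfl⟩ := Submodule.mem_one.1 (by simpa using hx)
  exact CliffordAlgebra.contractLeft_algebraMap _ d r

theorem contractLeft_mem_exteriorPower (d : Dual R M) {n : ℕ} {x : ExteriorAlgebra R M}
    (hx : x ∈ ⋀[R]^(n + 1) M) : d⌋x ∈ ⋀[R]^n M := by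
  induction n generalizing x with
  | zero =>
    obtain ⟨m, rfl⟩ : x ∈ LinearMap.range (ι R) := by simpa using hx
    rw [CliffordAlgebra.contractLeft_ι]
    simp
  | succ n ih =>
    rw [exteriorPower, pow_succ'] at hx
    refine Submodule.mul_induction_on hx ?_ fun _ _ hx hy => by rw [map_add]; exact add_mem hx hy
    rintro _ ⟨m, rfl⟩ y hy
    rw [contractLeft_ι_mul]
    exact sub_mem (Submodule.smul_mem _ _ hy) (ι_mul_mem_exteriorPower m (ih hy))

variable {d : Dual R M} {m : M} {x : ExteriorAlgebra R M}

theorem eq_ι_mul_contractLeft_of_ι_mul_eq_zero (hm : d m = 1) (hx : ι R m * x = 0) :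
    x = ι R m * (d⌋x) := by
  have h := contractLeft_ι_mul d m x
  rw [hx, map_zero, hm, one_smul] at h
  exact sub_eq_zero.1 h.symm

theorem ι_mul_contractLeft_eq_zero (hm : d m = 0) (hx : ι R m * x = 0) :
    ι R m * (d⌋x) = 0 := by
  have h := contractLeft_ι_mul d m x
  rwa [hx, map_zero, hm, zero_smul, zero_sub, eq_comm, neg_eq_zero] at h

theorem eq_ι_mul_ι_mul_contractLeft {d' : Dual R M} {u w : M} (hdu : d u = 1) (hdw : d w = 0)
    (hd'w : d' w = 1) (hu : ι R u * x = 0) (hw : ι R w * x = 0) :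
    x = ι R u * ι R w * (d'⌋(d⌋x)) := by
  rw [mul_assoc, ← eq_ι_mul_contractLeft_of_ι_mul_eq_zero hd'w (ι_mul_contractLeft_eq_zero hdw hw)]
  exact eq_ι_mul_contractLeft_of_ι_mul_eq_zero hdu hu

theorem eq_zero_of_forall_ι_mul_eq_zero {I : Type*} (b : Basis I R M) {n : ℕ}
    (hx : x ∈ ⋀[R]^n M) (s : Finset I) (hs : n < s.card) (h : ∀ i ∈ s, ι R (b i) * x = 0) :
    x = 0 := by
  classical
  induction n generalizing x s with
  | zero =>
    obtain ⟨i, hi⟩ := s.card_pos.1 hs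
    rw [eq_ι_mul_contractLeft_of_ι_mul_eq_zero (d := b.coord i) (by simp) (h i hi),
      contractLeft_eq_zero_of_mem_exteriorPower_zero _ hx, mul_zero]
  | succ n ih =>
    obtain ⟨i, hi⟩ := s.card_pos.1 (by omega)
    rw [eq_ι_mul_contractLeft_of_ι_mul_eq_zero (d := b.coord i) (by simp) (h i hi),
      ih (contractLeft_mem_exteriorPower _ hx) (s.erase i)
        (by rw [Finset.card_erase_of_mem hi]; omega)
        fun j hj => ι_mul_contractLeft_eq_zero (by simp [s.ne_of_mem_erase hj])
          (h j (s.mem_of_mem_erase hj)),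
      mul_zero]

noncomputable def topCoord {n : ℕ} (b : Basis (Fin n) R M) : ExteriorAlgebra R M →ₗ[R] R :=
  liftAlternating (Pi.single n b.det)

theorem eq_topCoord_smul {n : ℕ} (b : Basis (Fin n) R M) {y : ExteriorAlgebra R M}
    (hy : y ∈ ⋀[R]^n M) : y = topCoord b y • ιMulti R n b := by
  rw [← ιMulti_span_fixedDegree] at hy
  induction hy using Submodule.span_induction with
  | mem _ hy =>
    obtain ⟨v, rfl⟩ := hy
    rw [topCoord, liftAlternating_apply_ιMulti, Pi.single_eq_same]
    exact DFunLike.congr_fun (AlternatingMap.eq_basis_det_smulRight b (ιMulti R n)) v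
  | zero => simp
  | add _ _ _ _ hx hy => rw [map_add, add_smul, ← hx, ← hy]
  | smul r _ _ hx => rw [map_smul, smul_eq_mul, mul_smul, ← hx]

end CommRing

theorem exists_ne_zero_ι_mul_eq_zero {K V : Type*} [Field K] [NeZero (2 : K)] [AddCommGroup V]
    [Module K V] {k : ℕ} (hk : Odd k) (hV : finrank K V = k + 2) {ω : ExteriorAlgebra K V}
    (hω : ω ∈ ⋀[K]^k V) : ∃ v ≠ 0, ι K v * ω = 0 := by
  have := Module.finite_of_finrank_eq_succ hV
  let b := finBasisOfFinrankEq K V hV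
  let B : LinearMap.BilinForm K V :=
    LinearMap.mk₂ K (fun v w => topCoord b (ι K w * (ι K v * ω)))
      (fun _ _ _ => by simp only [map_add, add_mul, mul_add])
      (fun _ _ _ => by simp only [map_smul, smul_mul_assoc, mul_smul_comm])
      (fun _ _ _ => by simp only [map_add, add_mul])
      (fun _ _ _ => by simp only [map_smul, smul_mul_assoc])
  have hB : B.IsAlt := fun v => by simp [B, ← mul_assoc]
  obtain ⟨v, hBv, hv⟩ : ∃ v, (∀ w, B v w = 0) ∧ v ≠ 0 := by
    simpa [LinearMap.SeparatingLeft] using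
      hB.not_separatingLeft (by rw [hV]; exact hk.add_even even_two)
  refine ⟨v, hv, eq_zero_of_forall_ι_mul_eq_zero b (ι_mul_mem_exteriorPower v hω) Finset.univ
    (by simp) fun i _ => ?_⟩
  rw [eq_topCoord_smul b (ι_mul_mem_exteriorPower _ (ι_mul_mem_exteriorPower v hω)),
    show topCoord b (ι K (b i) * (ι K v * ω)) = 0 from hBv (b i), zero_smul]

end ExteriorAlgebra

theorem unique_line_annihilating_general {V₀ : Type*} [AddCommGroup V₀] [Module ℂ V₀]
    (h5 : Module.finrank ℂ V₀ = 5)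
    (ω : ExteriorAlgebra ℂ V₀) (hω : ω ∈ ⋀[ℂ]^3 V₀)
    (hnd : ¬ ∃ u₁ u₂ u₃ : V₀, ω = ι ℂ u₁ * ι ℂ u₂ * ι ℂ u₃) :
    ∃ v : V₀, v ≠ 0 ∧ ι ℂ v * ω = 0 ∧
      ∀ v' : V₀, ι ℂ v' * ω = 0 → ∃ c : ℂ, v' = c • v := by
  obtain ⟨v, hv, hvω⟩ := exists_ne_zero_ι_mul_eq_zero (k := 3) (by decide) h5 hω
  refine ⟨v, hv, hvω, fun v' hv'ω => ?_⟩
  by_contra! hv'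
  have hv'v : v' ∉ ℂ ∙ v := fun h => by
    obtain ⟨c, rfl⟩ := Submodule.mem_span_singleton.1 h
    exact hv' c rfl
  obtain ⟨d, hdv', hdv⟩ := exists_dual_apply_eq_one_and_apply_eq_zero hv'v
  obtain ⟨d', hd'v⟩ := Projective.exists_dual_eq_one ℂ hv
  obtain ⟨u, hu⟩ : d'⌋(d⌋ω) ∈ LinearMap.range (ι ℂ) := by
    simpa using contractLeft_mem_exteriorPower d' (contractLeft_mem_exteriorPower d hω)
  exact hnd ⟨v', v, u, hu ▸ eq_ι_mul_ι_mul_contractLeft hdv' hdv hd'v hv'ω hvω⟩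

/-- if `ω ∈ ⋀³V₀` (`dim V₀ = 5`) is not decomposable, there is a unique line
`[v]` with `v ∧ ω = 0`. -/
theorem unique_line_annihilating {V₀ : Type*} [AddCommGroup V₀] [Module ℂ V₀]
    [FiniteDimensional ℂ V₀] (h5 : Module.finrank ℂ V₀ = 5)
    (ω : ExteriorAlgebra ℂ V₀) (hω : ω ∈ ⋀[ℂ]^3 V₀)
    (hnd : ¬ ∃ u₁ u₂ u₃ : V₀, ω = ι ℂ u₁ * ι ℂ u₂ * ι ℂ u₃) :
    ∃ v : V₀, v ≠ 0 ∧ ι ℂ v * ω = 0 ∧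
      ∀ v' : V₀, ι ℂ v' * ω = 0 → ∃ c : ℂ, v' = c • v :=
  unique_line_annihilating_general h5 ω hω hnd
end

section
/- Let $R$ be a commutative ring, $U$ a free $R$-module of finite rank $d$, and $\gamma: U^\vee \to U$ an $R$-linear map that is symmetric (i.e., equal to its own transpose under the canonical identification $U^{\vee\vee} \cong U$), with matrix $M$ (symmetric) in dual bases. Then for all indices $i,j,k$ the vector $M^c_{ij} a_k - M^c_{jk} a_i \in U$ lies in the image of $\gamma$, where $a_1,\dots,a_d$ is the chosen basis of $U$ and $M^c$ is the adjugate of $M$. -/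
/-!
Put `A := M.updateRow i (Pi.single j 1)`, so that `det A = Mᶜ_{ji}`. The witness is the `k`-th
column of `adjugate A`. Since `M` and `A` differ only in row `i`, `M * adjugate A` agrees with
`A * adjugate A = det A • 1` off row `i`, while its `(i, k)` entry is the determinant of `A` with
row `k` replaced by row `i` of `M`; swapping rows `i` and `k` identifies this with `-Mᶜ_{jk}`.
Finally `Mᶜ` is symmetric along with `M`.
-/

open Matrix

namespace Matrix

variable {R n : Type*} [CommRing R] [Fintype n] [DecidableEq n]

theorem mul_adjugate_apply_eq_det_updateRow (M A : Matrix n n R) (m k : n) :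
    (M * A.adjugate) m k = (A.updateRow k (M m)).det := by
  rw [← cramer_transpose_apply, cramer_eq_adjugate_mulVec, ← adjugate_transpose, mul_apply,
    mulVec, dotProduct]
  simp only [transpose_apply, mul_comm]

theorem det_updateRow_updateRow_swap (A : Matrix n n R) {i k : n} (hik : i ≠ k) (u v : n → R) :
    ((A.updateRow i u).updateRow k v).det = -((A.updateRow i v).updateRow k u).det := by
  have hswap : ((A.updateRow i v).updateRow k u).submatrix (Equiv.swap i k) id =
      (A.updateRow i u).updateRow k v := by
    ext a b
    rcases eq_or_ne a i with rfl | hai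
    · simp [updateRow_apply, hik]
    · rcases eq_or_ne a k with rfl | hak
      · simp [updateRow_apply, hik]
      · simp [updateRow_apply, Equiv.swap_apply_of_ne_of_ne hai hak, hai, hak]
  rw [← hswap, det_permute, Equiv.Perm.sign_swap hik]
  simp

theorem mulVec_adjugate_updateRow_single_mulVec_single (M : Matrix n n R) {i k : n} (hik : i ≠ k)
    (j : n) :
    M *ᵥ ((M.updateRow i (Pi.single j 1)).adjugate *ᵥ Pi.single k 1) =
      M.adjugate j i • Pi.single k 1 - M.adjugate j k • Pi.single i 1 := by
  set A := M.updateRow i (Pi.single j 1)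
  have hdetA : A.det = M.adjugate j i := (adjugate_apply M j i).symm
  ext m
  rw [mulVec_mulVec, mulVec_single_one, col_apply]
  rcases eq_or_ne m i with rfl | hmi
  · have hrow : (M * A.adjugate) m k = -M.adjugate j k := by
      rw [mul_adjugate_apply_eq_det_updateRow, det_updateRow_updateRow_swap M hik,
        updateRow_eq_self, adjugate_apply]
    simp [hrow, hik]
  · have hrow : (M * A.adjugate) m k = (A * A.adjugate) m k := by
      simp only [mul_apply, A, updateRow_ne hmi]
    rw [hrow, mul_adjugate, hdetA]
    simp [one_apply, Pi.single_apply, hmi, eq_comm]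

end Matrix

/-- for a symmetric matrix `M` (viewed as a symmetric map `γ : U^∨ → U` in the
standard basis `a_i = Pi.single i 1`), the vector `Mᶜ_{ij} a_k - Mᶜ_{jk} a_i` lies in the image
of `γ`, i.e. it is `M.mulVec x` for some `x`. -/
theorem adjugate_relation {R : Type*} [CommRing R] {d : ℕ}
    (M : Matrix (Fin d) (Fin d) R) (hM : Mᵀ = M) (i j k : Fin d) :
    ∃ x : Fin d → R,
      M.mulVec x =
        M.adjugate i j • (Pi.single k 1 : Fin d → R) - M.adjugate j k • (Pi.single i 1 : Fin d → R) := by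
  have hsymm : M.adjugate j i = M.adjugate i j := (IsSymm.adjugate hM).apply i j
  rcases eq_or_ne i k with rfl | hik
  · exact ⟨0, by rw [mulVec_zero, ← hsymm, sub_self]⟩
  · exact ⟨_, hsymm ▸ mulVec_adjugate_updateRow_single_mulVec_single M hik j⟩
end
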